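/- Let |ψ⟩ be a pure n-qubit state whose stabilizer group has cardinality 2^{n−ν}, and let V be a unitary acting on a subset of l of the n qubits (extended by the identity on the remaining qubits). Then the stabilizer group of the state V|ψ⟩ has cardinality at least 2^{n−ν−2l}. In particular, a state prepared from |0⟩^{⊗n} by Clifford gates together with t non-Clifford gates each acting on at most l qubits has stabilizer nullity at most 2lt. -/

import Mathlib

open scoped Matrix ComplexOrder ENNReal Classical

noncomputable section

abbrev QVec (n : ℕ) := (Fin n → Fin 2) → ℂ
abbrev QMat (n : ℕ) := Matrix (Fin n → Fin 2) (Fin n → Fin 2) ℂ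

/-- `ψ` is a unit vector (a pure state). -/
def IsUnitVec {n : ℕ} (ψ : QVec n) : Prop := ∑ x, Complex.normSq (ψ x) = 1

/-- The ℓ² norm of a vector. -/
def vnorm {n : ℕ} (v : QVec n) : ℝ := Real.sqrt (∑ x, Complex.normSq (v x))

/-- The density matrix `|ψ⟩⟨ψ|`. -/
def dm {n : ℕ} (ψ : QVec n) : QMat n := Matrix.vecMulVec ψ (star ψ)

/-- The four single-qubit Pauli matrices I, X, Y, Z. -/
def pauli1 : Fin 4 → Matrix (Fin 2) (Fin 2) ℂ :=
  ![1, !![0, 1; 1, 0], !![0, -Complex.I; Complex.I, 0], !![1, 0; 0, -1]]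

/-- The `n`-qubit Pauli operator `P₁ ⊗ ⋯ ⊗ P_n` given by a string `p`. -/
def pauliOp {n : ℕ} (p : Fin n → Fin 4) : QMat n :=
  fun x y => ∏ j, pauli1 (p j) (x j) (y j)

/-- The `n`-qubit Pauli group: matrices `i^a · P₁ ⊗ ⋯ ⊗ P_n`. -/
def PauliGroup (n : ℕ) : Set (QMat n) :=
  {M | ∃ (a : Fin 4) (p : Fin n → Fin 4), M = Complex.I ^ (a : ℕ) • pauliOp p}

/-- A Hermitian Pauli operator: `± P₁ ⊗ ⋯ ⊗ P_n`. -/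
def IsHermPauli {n : ℕ} (M : QMat n) : Prop :=
  ∃ (s : ℂ) (p : Fin n → Fin 4), (s = 1 ∨ s = -1) ∧ M = s • pauliOp p

/-- The stabilizer group `G = {P ∈ 𝒫_n : P|ψ⟩ = |ψ⟩}` of a pure state. -/
def stabGroup {n : ℕ} (ψ : QVec n) : Set (QMat n) :=
  {P | P ∈ PauliGroup n ∧ P.mulVec ψ = ψ}

/-- `M` is supported on the qubits in `A` (acts as the identity on the rest),
i.e. `M = f_A ⊗ 𝟙` for some matrix `f` on the `A` qubits. -/
def MatSupportedOn {n : ℕ} (A : Finset (Fin n)) (M : QMat n) : Prop :=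
  ∃ f : ({j // j ∈ A} → Fin 2) → ({j // j ∈ A} → Fin 2) → ℂ,
    ∀ x y, M x y =
      if ∀ j ∉ A, x j = y j then f (fun j => x j.1) (fun j => y j.1) else 0

/-- The local stabilizer subgroup `G_A`: stabilizers acting as the identity outside `A`. -/
def localStab {n : ℕ} (ψ : QVec n) (A : Finset (Fin n)) : Set (QMat n) :=
  {P | P ∈ stabGroup ψ ∧ MatSupportedOn A P}

/-- `log₂` of the cardinality of a set. -/
def logCard {α : Type*} (S : Set α) : ℝ := Real.logb 2 S.ncard

/-- The stabilizer entanglement `ℰ(ψ; A|B) = (|S| − |S_A| − |S_B|)/2` (with `B = Aᶜ`). -/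
def stabEnt {n : ℕ} (ψ : QVec n) (A : Finset (Fin n)) : ℝ :=
  (logCard (stabGroup ψ) - logCard (localStab ψ A) - logCard (localStab ψ Aᶜ)) / 2

/-- Combine an assignment on `A` and on `Aᶜ` into one on all qubits. -/
def mergeFn {n : ℕ} (A : Finset (Fin n)) (x : {j // j ∈ A} → Fin 2)
    (z : {j // j ∈ Aᶜ} → Fin 2) : Fin n → Fin 2 :=
  fun j => if h : j ∈ A then x ⟨j, h⟩ else z ⟨j, Finset.mem_compl.mpr h⟩

/-- The reduced density matrix `ψ_A = Tr_{Aᶜ} |ψ⟩⟨ψ|`. -/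
def reducedDM {n : ℕ} (A : Finset (Fin n)) (ψ : QVec n) :
    Matrix ({j // j ∈ A} → Fin 2) ({j // j ∈ A} → Fin 2) ℂ :=
  fun x y => ∑ z : {j // j ∈ Aᶜ} → Fin 2, ψ (mergeFn A x z) * star (ψ (mergeFn A y z))

/-- The α-Rényi entropy (base 2) of a Hermitian matrix, defined through its eigenvalues:
`S₀ = log₂ rank`, `S₁` the von Neumann entropy, `S_∞ = −log₂` (largest eigenvalue, which is
the operator norm for positive semidefinite matrices), and
`S_α = (1−α)⁻¹ log₂ Σ λ_i^α` otherwise. -/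
def renyi {m : Type*} [Fintype m] [DecidableEq m] (α : ℝ≥0∞)
    (ρ : Matrix m m ℂ) : ℝ :=
  if h : ρ.IsHermitian then
    if α = 0 then Real.logb 2 (ρ.rank : ℝ)
    else if α = 1 then -∑ i, h.eigenvalues i * Real.logb 2 (h.eigenvalues i)
    else if α = ⊤ then -Real.logb 2 (⨆ i, h.eigenvalues i)
    else (1 / (1 - α.toReal)) * Real.logb 2 (∑ i, h.eigenvalues i ^ α.toReal)
  else 0

def IsUnitary {n : ℕ} (U : QMat n) : Prop := U * Uᴴ = 1 ∧ Uᴴ * U = 1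

/-- A Clifford unitary: a unitary whose conjugation action maps the Pauli group onto itself. -/
def IsClifford {n : ℕ} (U : QMat n) : Prop :=
  IsUnitary U ∧ (fun P => U * P * Uᴴ) '' PauliGroup n = PauliGroup n

/-- Amplitudes of the Bell pair `|φ₊⟩ = (|00⟩+|11⟩)/√2`. -/
def bellAmp (a b : Fin 2) : ℂ := if a = b then ((Real.sqrt 2 : ℝ) : ℂ)⁻¹ else 0

/-- Trace out the last `m` qubits of a pure state on `n + m` qubits. -/
def traceOutLast {n m : ℕ} (Ψ : QVec (n + m)) : QMat n :=
  fun x y => ∑ z : Fin m → Fin 2,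
    Ψ (Fin.append x z) * star (Ψ (Fin.append y z))

/-- `Tr √ρ` for a positive semidefinite matrix (junk value `0` otherwise). -/
def sqrtTrace {m : Type*} [Fintype m] [DecidableEq m] (ρ : Matrix m m ℂ) : ℝ :=
  if h : ρ.PosSemidef then
    (h.1.eigenvectorUnitary.1 * Matrix.diagonal (fun i => ((Real.sqrt (h.1.eigenvalues i) : ℝ) : ℂ)) *
      (star h.1.eigenvectorUnitary : Matrix m m ℂ)).trace.re else 0

/-- `S_{1/2}(ψ_A) = 2 log₂ Tr √ψ_A`. -/
def sHalf {n : ℕ} (A : Finset (Fin n)) (ψ : QVec n) : ℝ :=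
  2 * Real.logb 2 (sqrtTrace (reducedDM A ψ))

/-- The set `SEP^{(E)}(A;B)`: convex hull of pure states with `S_{1/2}` entanglement ≤ E. -/
def SEPE {n : ℕ} (A : Finset (Fin n)) (E : ℝ) : Set (QMat n) :=
  convexHull ℝ {ρ | ∃ ψ : QVec n, IsUnitVec ψ ∧ sHalf A ψ ≤ E ∧ ρ = dm ψ}

/-- `ψ` is a product state across the bipartition `A | Aᶜ`. -/
def IsProdAcross {n : ℕ} (A : Finset (Fin n)) (ψ : QVec n) : Prop :=
  ∃ (f : ({j // j ∈ A} → Fin 2) → ℂ) (g : ({j // j ∈ Aᶜ} → Fin 2) → ℂ),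
    ∀ x, ψ x = f (fun j => x j.1) * g (fun j => x j.1)

/-- The separable states across `A | Aᶜ`. -/
def SEPset {n : ℕ} (A : Finset (Fin n)) : Set (QMat n) :=
  convexHull ℝ {ρ | ∃ ψ : QVec n, IsUnitVec ψ ∧ IsProdAcross A ψ ∧ ρ = dm ψ}

/-- The trace norm `‖X‖₁ = Tr √(XᴴX)` (sum of singular values). -/
def traceNorm {m : Type*} [Fintype m] [DecidableEq m] (X : Matrix m m ℂ) : ℝ :=
  sqrtTrace (Xᴴ * X)

end

noncomputable section

/-!
If `V` acts only on the qubits in `X`, two stabilizers of `ψ` carrying the same Pauli string on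
`X` differ by a Pauli operator that is the identity on `X`; that operator commutes with `V` and
so stabilizes `V ψ`. Since there are `4^|X|` Pauli strings on `X`, the stabilizer group shrinks
by a factor of at most `4^|X| = 2^{2|X|}`. A Clifford gate `U` conjugates the stabilizer group
of `ψ` injectively into that of `U ψ`, and `|0⟩^{⊗n}` is stabilized by the `2^n` strings of
`I`s and `Z`s, so after `t` gates on at most `l` qubits at least `2^n / 4^{lt}` stabilizers
remain.
-/

open Complex (I)

lemma Set.ncard_le_mul_card_of_ncard_fiber_le {α β : Type*} [Fintype β] {S : Set α}
    (hS : S.Finite) (Φ : α → β) (k : ℕ) (hk : ∀ b, {a ∈ S | Φ a = b}.ncard ≤ k) :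
    S.ncard ≤ k * Fintype.card β := by
  rw [Set.ncard_eq_toFinset_card S hS, ← Finset.card_univ]
  refine Finset.card_le_mul_card_image_of_maps_to (f := Φ) (fun _ _ => Finset.mem_univ _) k
    fun b _ => ?_
  convert hk b
  rw [← Set.ncard_coe_finset]
  simp

lemma two_pow_sub_le_of_two_pow_le_mul {a b x : ℕ} (hx : 1 ≤ x) (h : 2 ^ a ≤ 2 ^ b * x) :
    2 ^ (a - b) ≤ x := by
  rcases le_total a b with hab | hba
  · simpa [Nat.sub_eq_zero_of_le hab] using hx
  · refine Nat.le_of_mul_le_mul_left ?_ (Nat.two_pow_pos b)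
    rwa [← pow_add, Nat.add_sub_cancel' hba]

section

variable {n : ℕ}

/-- Labelling `I, X, Y, Z` by `0, 1, 2, 3`, the label of `σ_a σ_b` is `a xor b`, up to a phase
`I ^ pauliMulPhase a b`. -/
def pauliMulIdx : Fin 4 → Fin 4 → Fin 4 :=
  ![![0, 1, 2, 3], ![1, 0, 3, 2], ![2, 3, 0, 1], ![3, 2, 1, 0]]

def pauliMulPhase : Fin 4 → Fin 4 → Fin 4 :=
  ![![0, 0, 0, 0], ![0, 0, 1, 3], ![0, 3, 0, 1], ![0, 1, 3, 0]]

lemma pauli1_mul (a b : Fin 4) :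
    pauli1 a * pauli1 b = I ^ (pauliMulPhase a b : ℕ) • pauli1 (pauliMulIdx a b) := by
  fin_cases a <;> fin_cases b <;>
    · ext i j
      fin_cases i <;> fin_cases j <;>
        simp [pauli1, pauliMulIdx, pauliMulPhase, Matrix.mul_apply, Fin.sum_univ_two,
          Matrix.one_apply, pow_succ]

lemma pauliMulIdx_self (a : Fin 4) : pauliMulIdx a a = 0 := by fin_cases a <;> rfl

lemma pauliMulPhase_self (a : Fin 4) : pauliMulPhase a a = 0 := by fin_cases a <;> rfl

lemma pauli1_conjTranspose (a : Fin 4) : (pauli1 a)ᴴ = pauli1 a := by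
  fin_cases a <;>
    · ext i j
      fin_cases i <;> fin_cases j <;> simp [pauli1, Matrix.conjTranspose_apply]

lemma pauliOp_zero : pauliOp (fun _ : Fin n => 0) = 1 := by
  ext x y
  by_cases h : x = y
  · subst h; simp [pauliOp, pauli1]
  · obtain ⟨j, hj⟩ := Function.ne_iff.mp h
    rw [Matrix.one_apply_ne h]
    exact Finset.prod_eq_zero (Finset.mem_univ j) (by simp [pauli1, hj])

lemma pauliOp_mul (p q : Fin n → Fin 4) :
    pauliOp p * pauliOp q = I ^ (∑ j, (pauliMulPhase (p j) (q j) : ℕ)) •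
      pauliOp (fun j => pauliMulIdx (p j) (q j)) := by
  ext x y
  have hfactor (j : Fin n) : ∑ c, pauli1 (p j) (x j) c * pauli1 (q j) c (y j)
      = I ^ (pauliMulPhase (p j) (q j) : ℕ) * pauli1 (pauliMulIdx (p j) (q j)) (x j) (y j) := by
    simpa [Matrix.mul_apply] using congrFun (congrFun (pauli1_mul (p j) (q j)) (x j)) (y j)
  -- a sum over `z : Fin n → Fin 2` of a product over `j` factorises
  simp only [Matrix.mul_apply, pauliOp, Matrix.smul_apply, smul_eq_mul, ← Finset.prod_mul_distrib]
  rw [← Fintype.piFinset_univ, ← Finset.prod_univ_sum (fun _ => Finset.univ)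
    (fun j c => pauli1 (p j) (x j) c * pauli1 (q j) c (y j))]
  simp only [hfactor, Finset.prod_mul_distrib, Finset.prod_pow_eq_pow_sum]

lemma pauliOp_conjTranspose (p : Fin n → Fin 4) : (pauliOp p)ᴴ = pauliOp p := by
  ext x y
  simp only [Matrix.conjTranspose_apply, pauliOp, star_prod]
  refine Finset.prod_congr rfl fun j _ => ?_
  simpa [Matrix.conjTranspose_apply] using
    congrFun (congrFun (pauli1_conjTranspose (p j)) (x j)) (y j)

lemma pauliOp_mul_self (p : Fin n → Fin 4) : pauliOp p * pauliOp p = 1 := by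
  rw [pauliOp_mul]
  simp [pauliMulIdx_self, pauliMulPhase_self, pauliOp_zero]

lemma I_pow_smul_pauliOp_mem_pauliGroup (N : ℕ) (p : Fin n → Fin 4) :
    I ^ N • pauliOp p ∈ PauliGroup n :=
  ⟨⟨N % 4, Nat.mod_lt _ (by norm_num)⟩, p, by rw [Complex.I_pow_eq_pow_mod]⟩

lemma one_mem_pauliGroup (n : ℕ) : (1 : QMat n) ∈ PauliGroup n := by
  simpa [pauliOp_zero] using I_pow_smul_pauliOp_mem_pauliGroup 0 (fun _ : Fin n => 0)

lemma pauliGroup_finite (n : ℕ) : (PauliGroup n).Finite :=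
  (Set.finite_range fun ap : Fin 4 × (Fin n → Fin 4) => I ^ (ap.1 : ℕ) • pauliOp ap.2).subset
    fun _ ⟨a, p, h⟩ => ⟨(a, p), h.symm⟩

lemma conjTranspose_mul_self_of_mem_pauliGroup {M : QMat n} (hM : M ∈ PauliGroup n) :
    Mᴴ * M = 1 := by
  obtain ⟨a, p, rfl⟩ := hM
  rw [Matrix.conjTranspose_smul, pauliOp_conjTranspose, Matrix.smul_mul, Matrix.mul_smul,
    smul_smul, pauliOp_mul_self, star_pow, ← mul_pow, Complex.star_def, Complex.conj_I]
  simp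

lemma I_pow_smul_pauliOp_mul_conjTranspose (a b : ℕ) (p q : Fin n → Fin 4) :
    (I ^ a • pauliOp p) * (I ^ b • pauliOp q)ᴴ =
      I ^ (a + 3 * b + ∑ j, (pauliMulPhase (p j) (q j) : ℕ)) •
        pauliOp (fun j => pauliMulIdx (p j) (q j)) := by
  have hconj : star (I ^ b) = I ^ (3 * b) := by
    rw [star_pow, pow_mul, Complex.star_def, Complex.conj_I]
    norm_num [pow_succ]
  rw [Matrix.conjTranspose_smul, pauliOp_conjTranspose, Matrix.smul_mul, Matrix.mul_smul,
    smul_smul, pauliOp_mul, smul_smul, hconj, pow_add, pow_add]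

lemma MatSupportedOn.smul {A : Finset (Fin n)} {M : QMat n} (hM : MatSupportedOn A M)
    (c : ℂ) : MatSupportedOn A (c • M) := by
  obtain ⟨f, hf⟩ := hM
  exact ⟨c • f, fun x y => by simp [hf]⟩

lemma pauliOp_supportedOn_compl {X : Finset (Fin n)} {r : Fin n → Fin 4}
    (hr : ∀ j ∈ X, r j = 0) : MatSupportedOn Xᶜ (pauliOp r) := by
  refine ⟨fun u v => ∏ j : {j // j ∈ Xᶜ}, pauli1 (r j) (u j) (v j), fun x y => ?_⟩
  have hX : ∏ j ∈ X, pauli1 (r j) (x j) (y j) = if ∀ j ∈ X, x j = y j then 1 else 0 := by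
    rw [Finset.prod_congr rfl fun j hj => by rw [hr j hj]]
    simp [pauli1, Matrix.one_apply, Finset.prod_boole]
  rw [pauliOp, ← Finset.prod_mul_prod_compl X, hX]
  simp only [Finset.mem_compl, not_not]
  rw [← Finset.prod_coe_sort Xᶜ]
  split_ifs <;> simp

lemma MatSupportedOn.commute {X : Finset (Fin n)} {M N : QMat n}
    (hM : MatSupportedOn X M) (hN : MatSupportedOn Xᶜ N) : Commute M N := by
  obtain ⟨f, hf⟩ := hM
  obtain ⟨g, hg⟩ := hN
  have hXc (j : {j // j ∈ Xᶜ}) : (j : Fin n) ∉ X := Finset.mem_compl.mp j.2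
  ext x y
  simp only [Matrix.mul_apply, hf, hg]
  -- in each product only the intermediate index agreeing with `x` on one side and with `y`
  -- on the other contributes
  rw [Fintype.sum_eq_single (X.piecewise y x), Fintype.sum_eq_single (X.piecewise x y)]
  · simp +contextual [Finset.piecewise, hXc, mul_comm]
  all_goals
    intro z hz
    by_contra hne
    refine hz (funext fun j => ?_)
    by_cases hj : j ∈ X <;> simp_all [Finset.piecewise]

lemma stabGroup_finite (ψ : QVec n) : (stabGroup ψ).Finite :=
  (pauliGroup_finite n).subset fun _ h => h.1

lemma one_le_ncard_stabGroup (ψ : QVec n) : 1 ≤ (stabGroup ψ).ncard :=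
  (Set.ncard_pos (stabGroup_finite ψ)).mpr ⟨1, one_mem_pauliGroup n, Matrix.one_mulVec ψ⟩

lemma conjTranspose_mulVec_of_mem_stabGroup {ψ : QVec n} {Q : QMat n}
    (hQ : Q ∈ stabGroup ψ) : Qᴴ *ᵥ ψ = ψ := by
  conv_lhs => rw [← hQ.2]
  rw [Matrix.mulVec_mulVec, conjTranspose_mul_self_of_mem_pauliGroup hQ.1, Matrix.one_mulVec]

lemma mem_stabGroup_mulVec_of_commute {ψ : QVec n} {P V : QMat n}
    (hP : P ∈ stabGroup ψ) (hPV : Commute V P) : P ∈ stabGroup (V *ᵥ ψ) :=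
  ⟨hP.1, by rw [Matrix.mulVec_mulVec, ← hPV.eq, ← Matrix.mulVec_mulVec, hP.2]⟩

lemma mul_conjTranspose_mem_stabGroup_mulVec {ψ : QVec n} {V : QMat n}
    {X : Finset (Fin n)} (hV : MatSupportedOn X V) {a b : ℕ} {p q : Fin n → Fin 4}
    (hP : I ^ a • pauliOp p ∈ stabGroup ψ) (hQ : I ^ b • pauliOp q ∈ stabGroup ψ)
    (hpq : ∀ j ∈ X, p j = q j) :
    (I ^ a • pauliOp p) * (I ^ b • pauliOp q)ᴴ ∈ stabGroup (V *ᵥ ψ) := by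
  have hstab : (I ^ a • pauliOp p) * (I ^ b • pauliOp q)ᴴ ∈ stabGroup ψ := by
    refine ⟨?_, ?_⟩
    · rw [I_pow_smul_pauliOp_mul_conjTranspose]
      exact I_pow_smul_pauliOp_mem_pauliGroup _ _
    · rw [← Matrix.mulVec_mulVec, conjTranspose_mulVec_of_mem_stabGroup hQ, hP.2]
  refine mem_stabGroup_mulVec_of_commute hstab (hV.commute ?_)
  rw [I_pow_smul_pauliOp_mul_conjTranspose]
  exact (pauliOp_supportedOn_compl fun j hj => by rw [hpq j hj, pauliMulIdx_self]).smul _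

theorem ncard_stabGroup_le_four_pow_mul_of_supportedOn (ψ : QVec n) {V : QMat n}
    {X : Finset (Fin n)} (hV : MatSupportedOn X V) :
    (stabGroup ψ).ncard ≤ 4 ^ X.card * (stabGroup (V *ᵥ ψ)).ncard := by
  choose! a p hap using fun M (hM : M ∈ PauliGroup n) => hM
  have hcard : Fintype.card ({j // j ∈ X} → Fin 4) = 4 ^ X.card := by simp
  rw [← hcard, mul_comm]
  refine Set.ncard_le_mul_card_of_ncard_fiber_le (stabGroup_finite ψ)
    (fun M (j : {j // j ∈ X}) => p M j) _ fun s => ?_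
  rcases Set.eq_empty_or_nonempty {P ∈ stabGroup ψ | (fun j : {j // j ∈ X} => p P j) = s} with
    hempty | ⟨Q, hQ, rfl⟩
  · simp [hempty]
  refine Set.ncard_le_ncard_of_injOn (· * Qᴴ) (fun P ⟨hP, hPQ⟩ => ?_) (fun P _ P' _ h => ?_)
    (stabGroup_finite _)
  · have h := mul_conjTranspose_mem_stabGroup_mulVec hV (by rwa [← hap P hP.1])
      (by rwa [← hap Q hQ.1]) fun j hj => congrFun hPQ ⟨j, hj⟩
    rwa [← hap P hP.1, ← hap Q hQ.1] at h
  · simpa [mul_assoc, conjTranspose_mul_self_of_mem_pauliGroup hQ.1] using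
      congrArg (· * Q) h

theorem ncard_stabGroup_le_of_isClifford (ψ : QVec n) {U : QMat n} (hU : IsClifford U) :
    (stabGroup ψ).ncard ≤ (stabGroup (U *ᵥ ψ)).ncard := by
  have hUU : Uᴴ * U = 1 := hU.1.2
  refine Set.ncard_le_ncard_of_injOn (fun P => U * P * Uᴴ) (fun P hP => ⟨?_, ?_⟩)
    (fun P _ P' _ h => ?_) (stabGroup_finite _)
  · exact hU.2 ▸ Set.mem_image_of_mem _ hP.1
  · rw [Matrix.mulVec_mulVec, mul_assoc, mul_assoc, hUU, mul_one, ← Matrix.mulVec_mulVec, hP.2]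
  · simpa [← mul_assoc, hUU, mul_assoc _ _ U] using congrArg (fun M => Uᴴ * M * U) h

/-- The labels of `I` and `Z`, the Pauli matrices fixing `|0⟩`. -/
def pauliIZ : Fin 2 → Fin 4 := ![0, 3]

lemma pauli1_pauliIZ_apply (d c c' : Fin 2) :
    pauli1 (pauliIZ d) c c' = if c = c' then (if d = 1 ∧ c = 1 then -1 else 1) else 0 := by
  fin_cases d <;> fin_cases c <;> fin_cases c' <;> simp [pauli1, pauliIZ]

theorem two_pow_le_ncard_stabGroup_zero (n : ℕ) :
    2 ^ n ≤
      (stabGroup (fun x : Fin n → Fin 2 => if x = (fun _ => 0) then (1 : ℂ) else 0)).ncard := by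
  set e₀ : QVec n := fun x => if x = (fun _ => 0) then (1 : ℂ) else 0
  set Z : (Fin n → Fin 2) → QMat n := fun b => pauliOp (fun j => pauliIZ (b j))
  have hmem (b : Fin n → Fin 2) : Z b ∈ stabGroup e₀ := by
    refine ⟨by simpa using I_pow_smul_pauliOp_mem_pauliGroup 0 (fun j => pauliIZ (b j)), ?_⟩
    ext x
    simp only [e₀, Matrix.mulVec, dotProduct, mul_ite, mul_one, mul_zero,
      Finset.sum_ite_eq', Finset.mem_univ, if_true, Z, pauliOp, pauli1_pauliIZ_apply]
    split_ifs with hx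
    · simp [hx]
    · obtain ⟨j, hj⟩ := Function.ne_iff.mp hx
      exact Finset.prod_eq_zero (Finset.mem_univ j) (if_neg hj)
  have hinj : Function.Injective Z := by
    intro b b' h
    funext j₀
    have hdiag (b : Fin n → Fin 2) : Z b (Pi.single j₀ 1) (Pi.single j₀ 1) =
        if b j₀ = 1 then -1 else 1 := by
      simp only [Z, pauliOp]
      rw [Fintype.prod_eq_single j₀ fun j hj => by simp [pauli1_pauliIZ_apply, hj]]
      simp [pauli1_pauliIZ_apply]
    have := congrFun (congrFun h (Pi.single j₀ 1)) (Pi.single j₀ 1)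
    rw [hdiag, hdiag] at this
    split_ifs at this <;> norm_num at this <;> omega
  calc 2 ^ n = (Set.range Z).ncard := by
        rw [Set.ncard_range_of_injective hinj, Nat.card_eq_fintype_card]; simp
    _ ≤ (stabGroup e₀).ncard :=
        Set.ncard_le_ncard (Set.range_subset_iff.mpr hmem) (stabGroup_finite _)

theorem ncard_stabGroup_le_pow_sum_mul_listProd {m : ℕ} (U : Fin m → QMat n) (c : Fin m → ℕ)
    (hU : ∀ i φ, (stabGroup φ).ncard ≤ 4 ^ c i * (stabGroup (U i *ᵥ φ)).ncard)
    (φ : QVec n) :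
    (stabGroup φ).ncard ≤ 4 ^ (∑ i, c i) * (stabGroup ((List.ofFn U).prod *ᵥ φ)).ncard := by
  induction m generalizing φ with
  | zero => simp
  | succ m ih =>
    rw [List.ofFn_succ, List.prod_cons, ← Matrix.mulVec_mulVec, Fin.sum_univ_succ, pow_add,
      mul_assoc]
    calc (stabGroup φ).ncard
        ≤ 4 ^ (∑ i : Fin m, c i.succ) *
            (stabGroup ((List.ofFn fun i => U i.succ).prod *ᵥ φ)).ncard :=
          ih _ _ (fun i => hU i.succ) φ
      _ ≤ _ := by
          rw [mul_left_comm]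
          exact Nat.mul_le_mul_left _ (hU 0 _)

end

/-- (i) a unitary acting on `l` qubits shrinks the stabilizer group by a
factor of at most `2^{2l}`; (ii) in particular, a state prepared from `|0⟩^{⊗n}` by Clifford
gates together with `t` non-Clifford gates each acting on at most `l` qubits has stabilizer
nullity at most `2lt`. -/
theorem statement2 (n : ℕ) :
    (∀ (ν l : ℕ) (ψ : QVec n) (V : QMat n) (X : Finset (Fin n)),
      IsUnitVec ψ → (stabGroup ψ).ncard = 2 ^ (n - ν) → ν ≤ n →
      IsUnitary V → X.card = l → MatSupportedOn X V →
      2 ^ (n - ν - 2 * l) ≤ (stabGroup (V.mulVec ψ)).ncard) ∧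
    (∀ (t l m : ℕ) (U : Fin m → QMat n) (T : Finset (Fin m)) (ψ : QVec n),
      (∀ i, IsUnitary (U i)) →
      (∀ i ∉ T, IsClifford (U i)) →
      (∀ i ∈ T, ∃ X : Finset (Fin n), X.card ≤ l ∧ MatSupportedOn X (U i)) →
      T.card ≤ t →
      ψ = (List.ofFn U).prod.mulVec (fun x => if x = (fun _ => 0) then (1 : ℂ) else 0) →
      2 ^ (n - 2 * l * t) ≤ (stabGroup ψ).ncard) := by
  refine ⟨fun ν l ψ V X _ hψ _ _ hX hV => ?_,
    fun t l m U T ψ _ hClifford hLocal hT hψ => ?_⟩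
  · have h := ncard_stabGroup_le_four_pow_mul_of_supportedOn ψ hV
    rw [hψ, hX, show (4 : ℕ) = 2 ^ 2 by rfl, ← pow_mul] at h
    exact two_pow_sub_le_of_two_pow_le_mul (one_le_ncard_stabGroup _) h
  · have hgate (i : Fin m) (φ : QVec n) :
        (stabGroup φ).ncard ≤
          4 ^ (if i ∈ T then l else 0) * (stabGroup (U i *ᵥ φ)).ncard := by
      split_ifs with hi
      · obtain ⟨X, hXl, hX⟩ := hLocal i hi
        exact (ncard_stabGroup_le_four_pow_mul_of_supportedOn φ hX).trans
          (Nat.mul_le_mul_right _ (Nat.pow_le_pow_right (by norm_num) hXl))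
      · simpa using ncard_stabGroup_le_of_isClifford φ (hClifford i hi)
    have h := (two_pow_le_ncard_stabGroup_zero n).trans
      (ncard_stabGroup_le_pow_sum_mul_listProd U _ hgate _)
    have hsum : ∑ i, (if i ∈ T then l else 0) = T.card * l := by simp
    rw [← hψ, hsum] at h
    have hpow : 4 ^ (T.card * l) ≤ 2 ^ (2 * l * t) :=
      calc 4 ^ (T.card * l) ≤ 4 ^ (t * l) := Nat.pow_le_pow_right (by norm_num) (by gcongr)
        _ = 2 ^ (2 * l * t) := by rw [show 2 * l * t = 2 * (t * l) by ring, pow_mul 2 2]; rfl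
    exact two_pow_sub_le_of_two_pow_le_mul (one_le_ncard_stabGroup _)
      (h.trans (Nat.mul_le_mul_right _ hpow))

end
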